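/- Let η be an absolutely continuous path on [0,T] and let S be a path on [0,T] of finite p-variation for some p ≥ 1. Then for all 0 ≤ s ≤ t ≤ T, the Riemann sums Σ_{u∈π} η_u (S_{u'} − S_u) converge, as the mesh of the partition π of [s,t] tends to zero, to a limit that is independent of the sequence of partitions (defining the Young integral ∫ₛᵗ η dS). Moreover the integration-by-parts formula ∫ₛᵗ η_u dS_u + ∫ₛᵗ S_u dη_u = η_t S_t − η_s S_s holds, where the second integral is the Stieltjes integral of S against η. -/

import Mathlib

open MeasureTheory Real

/-- A finite partition `P 0 = s ≤ P 1 ≤ ⋯ ≤ P n = t` of the interval `[s,t]`. -/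
def IsPartitionOn (s t : ℝ) (n : ℕ) (P : ℕ → ℝ) : Prop :=
  P 0 = s ∧ P n = t ∧ ∀ i, i < n → P i ≤ P (i + 1)

/-!
Write `V` for the `p`-variation of `S` started at `0` and `G` for the primitive of `|η'|`: both are
monotone, `G` is continuous, and `|S v - S u| ≤ (V v - V u) ^ (1 / p)`. Summation by parts turns
the difference between a Riemann sum and `η t * S t - η s * S s - ∫ S η'` into
`Σ ∫_u^u' (S x - S u') η' x dx`, which is at most `Σ (V u' - V u) ^ (1 / p) * (G u' - G u)`.
That sum vanishes with the mesh: increments with `V u' - V u ≤ θ` contribute at most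
`θ ^ (1 / p) * (G t - G s)`, there are at most `(V t - V s) / θ` others, and each of those is
small by uniform continuity of `G`. The same Hölder-type bound makes `S` continuous off the
countably many jumps of `V`, hence measurable, so `∫ S η'` exists.
-/

open Set Filter Topology

namespace IsPartitionOn

variable {s t : ℝ} {n : ℕ} {P : ℕ → ℝ}

theorem apply_le_apply (hP : IsPartitionOn s t n P) {i j : ℕ} (hij : i ≤ j) (hjn : j ≤ n) :
    P i ≤ P j := by
  induction j, hij using Nat.le_induction with
  | base => rfl
  | succ j _ ih => exact (ih (by omega)).trans (hP.2.2 j (by omega))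

theorem mem_Icc (hP : IsPartitionOn s t n P) {i : ℕ} (hi : i ≤ n) : P i ∈ Icc s t :=
  ⟨hP.1 ▸ hP.apply_le_apply (Nat.zero_le i) hi, hP.2.1 ▸ hP.apply_le_apply hi le_rfl⟩

theorem sum_range_sub (hP : IsPartitionOn s t n P) (f : ℝ → ℝ) :
    ∑ i ∈ Finset.range n, (f (P (i + 1)) - f (P i)) = f t - f s := by
  rw [Finset.sum_range_sub (fun i => f (P i)), hP.1, hP.2.1]

end IsPartitionOn

theorem Finset.sum_range_mul_sub_eq {R : Type*} [CommRing R] (x y : ℕ → R) (n : ℕ) :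
    ∑ i ∈ Finset.range n, x i * (y (i + 1) - y i)
      = x n * y n - x 0 * y 0 - ∑ i ∈ Finset.range n, (x (i + 1) - x i) * y (i + 1) := by
  rw [eq_sub_iff_add_eq, ← Finset.sum_add_distrib, ← Finset.sum_range_sub (fun i => x i * y i)]
  exact Finset.sum_congr rfl fun i _ => by ring

theorem Finset.sum_rpow_mul_le {ι : Type*} (I : Finset ι) {a ν : ι → ℝ} {r θ A ω : ℝ}
    (hr : 0 ≤ r) (hθ : 0 < θ) (ha : ∀ i ∈ I, 0 ≤ a i) (hA : ∑ i ∈ I, a i ≤ A)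
    (hν : ∀ i ∈ I, 0 ≤ ν i) (hω : 0 ≤ ω) (hνω : ∀ i ∈ I, ν i ≤ ω) :
    ∑ i ∈ I, a i ^ r * ν i ≤ θ ^ r * ∑ i ∈ I, ν i + A / θ * A ^ r * ω := by
  set bad := I.filter (fun i => θ < a i)
  have ha_le : ∀ i ∈ I, a i ≤ A := fun i hi =>
    (Finset.single_le_sum ha hi).trans hA
  have hsmall : ∑ i ∈ I.filter (fun i => ¬θ < a i), a i ^ r * ν i ≤ θ ^ r * ∑ i ∈ I, ν i := by
    rw [Finset.mul_sum]
    refine (Finset.sum_le_sum fun i hi => ?_).trans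
      (Finset.sum_le_sum_of_subset_of_nonneg (Finset.filter_subset _ I)
        fun i hi _ => mul_nonneg (by positivity) (hν i hi))
    obtain ⟨hiI, hiθ⟩ := Finset.mem_filter.mp hi
    exact mul_le_mul_of_nonneg_right
      (rpow_le_rpow (ha i hiI) (not_lt.mp hiθ) hr) (hν i hiI)
  have hcard : (bad.card : ℝ) * θ ≤ A := by
    calc (bad.card : ℝ) * θ = ∑ _i ∈ bad, θ := by rw [Finset.sum_const, nsmul_eq_mul]
      _ ≤ ∑ i ∈ bad, a i := Finset.sum_le_sum fun i hi => (Finset.mem_filter.mp hi).2.le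
      _ ≤ ∑ i ∈ I, a i :=
        Finset.sum_le_sum_of_subset_of_nonneg (Finset.filter_subset _ I) fun i hi _ => ha i hi
      _ ≤ A := hA
  have hA0 : 0 ≤ A := by
    have : (0 : ℝ) ≤ bad.card * θ := by positivity
    linarith
  have hlarge : ∑ i ∈ bad, a i ^ r * ν i ≤ A / θ * A ^ r * ω := by
    calc ∑ i ∈ bad, a i ^ r * ν i ≤ ∑ _i ∈ bad, A ^ r * ω := by
          refine Finset.sum_le_sum fun i hi => ?_
          have hiI := (Finset.mem_filter.mp hi).1
          exact mul_le_mul (rpow_le_rpow (ha i hiI) (ha_le i hiI) hr) (hνω i hiI) (hν i hiI)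
            (by positivity)
      _ = bad.card * (A ^ r * ω) := by rw [Finset.sum_const, nsmul_eq_mul]
      _ ≤ A / θ * (A ^ r * ω) := by
          gcongr
          exact (le_div_iff₀ hθ).mpr hcard
      _ = A / θ * A ^ r * ω := by ring
  rw [← Finset.sum_filter_add_sum_filter_not I (fun i => θ < a i)]
  linarith

theorem exists_mesh_sum_rpow_mul_le {V G : ℝ → ℝ} {s t r ε : ℝ} (hst : s ≤ t)
    (hr : 0 < r) (hV : MonotoneOn V (Icc s t)) (hG : MonotoneOn G (Icc s t))
    (hGc : ContinuousOn G (Icc s t)) (hε : 0 < ε) :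
    ∃ δ > 0, ∀ (n : ℕ) (P : ℕ → ℝ), IsPartitionOn s t n P → (∀ i < n, P (i + 1) - P i ≤ δ) →
      ∑ i ∈ Finset.range n, (V (P (i + 1)) - V (P i)) ^ r * (G (P (i + 1)) - G (P i)) ≤ ε := by
  have hs : s ∈ Icc s t := left_mem_Icc.mpr hst
  have ht : t ∈ Icc s t := right_mem_Icc.mpr hst
  set A := V t - V s
  have hA : 0 ≤ A := sub_nonneg.mpr (hV hs ht hst)
  have hN : 0 ≤ G t - G s := sub_nonneg.mpr (hG hs ht hst)
  -- `θ` and `ω` make each of the two terms of `Finset.sum_rpow_mul_le` at most `ε / 2`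
  set θ := (ε / (2 * (G t - G s + 1))) ^ r⁻¹
  have hθ : 0 < θ := by positivity
  have hθr : θ ^ r = ε / (2 * (G t - G s + 1)) := by
    rw [← rpow_mul (by positivity), inv_mul_cancel₀ hr.ne', rpow_one]
  set ω := ε / 2 / (A / θ * A ^ r + 1)
  have hω : 0 < ω := by positivity
  obtain ⟨δ, hδ, hGδ⟩ := Metric.uniformContinuousOn_iff.mp
    (isCompact_Icc.uniformContinuousOn_of_continuous hGc) ω hω
  refine ⟨δ / 2, by positivity, fun n P hP hmesh => ?_⟩
  have hPs : ∀ i < n, P i ∈ Icc s t ∧ P (i + 1) ∈ Icc s t ∧ P i ≤ P (i + 1) := fun i hi =>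
    ⟨hP.mem_Icc hi.le, hP.mem_Icc hi, hP.2.2 i hi⟩
  have hνω : ∀ i ∈ Finset.range n, G (P (i + 1)) - G (P i) ≤ ω := by
    intro i hi
    obtain ⟨hPi, hPi1, hle⟩ := hPs i (Finset.mem_range.mp hi)
    have hdist : dist (P (i + 1)) (P i) < δ := by
      rw [dist_eq, abs_of_nonneg (sub_nonneg.mpr hle)]
      linarith [hmesh i (Finset.mem_range.mp hi)]
    exact (le_abs_self _).trans (hGδ _ hPi1 _ hPi hdist).le
  have hinc : ∀ F : ℝ → ℝ, MonotoneOn F (Icc s t) →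
      ∀ i ∈ Finset.range n, 0 ≤ F (P (i + 1)) - F (P i) := fun F hF i hi =>
    have h := hPs i (Finset.mem_range.mp hi)
    sub_nonneg.mpr (hF h.1 h.2.1 h.2.2)
  calc _ ≤ θ ^ r * ∑ i ∈ Finset.range n, (G (P (i + 1)) - G (P i)) + A / θ * A ^ r * ω :=
        Finset.sum_rpow_mul_le _ hr.le hθ (hinc V hV) (hP.sum_range_sub V).le (hinc G hG)
          hω.le hνω
    _ ≤ ε / 2 + ε / 2 := by
        rw [hP.sum_range_sub G, hθr]
        gcongr
        · rw [div_mul_eq_mul_div, div_le_div_iff₀ (by positivity) two_pos]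
          nlinarith
        · rw [mul_div_assoc', div_le_iff₀ (by positivity)]
          nlinarith
    _ = ε := add_halves ε

def pVarSums (S : ℝ → ℝ) (p a b : ℝ) : Set ℝ :=
  {x | ∃ n P, IsPartitionOn a b n P ∧ x = ∑ i ∈ Finset.range n, |S (P (i + 1)) - S (P i)| ^ p}

noncomputable def pVariation (S : ℝ → ℝ) (p a b : ℝ) : ℝ :=
  sSup (pVarSums S p a b)

section PVariation

variable {S : ℝ → ℝ} {p a b c : ℝ}

theorem abs_sub_rpow_mem_pVarSums (hab : a ≤ b) : |S b - S a| ^ p ∈ pVarSums S p a b :=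
  ⟨1, fun i => if i = 0 then a else b, ⟨rfl, rfl, fun i hi => by simp [Nat.lt_one_iff.mp hi, hab]⟩,
    by simp⟩

theorem add_abs_sub_rpow_mem_pVarSums {x : ℝ} (hbc : b ≤ c) (hx : x ∈ pVarSums S p a b) :
    x + |S c - S b| ^ p ∈ pVarSums S p a c := by
  obtain ⟨n, P, ⟨hP0, hPn, hPmono⟩, rfl⟩ := hx
  refine ⟨n + 1, fun i => if i ≤ n then P i else c, ⟨by simp [hP0], by simp, fun i hi => ?_⟩, ?_⟩
  · rcases Nat.lt_or_ge i n with hin | hin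
    · simpa [hin.le, Nat.succ_le_of_lt hin] using hPmono i hin
    · obtain rfl : i = n := by omega
      simpa [hPn] using hbc
  · rw [Finset.sum_range_succ]
    congr 1
    · exact Finset.sum_congr rfl fun i hi => by
        simp [(Finset.mem_range.mp hi).le, Nat.succ_le_of_lt (Finset.mem_range.mp hi)]
    · simp [hPn]

theorem bddAbove_pVarSums_of_le (hbc : b ≤ c) (hc : BddAbove (pVarSums S p a c)) :
    BddAbove (pVarSums S p a b) := by
  obtain ⟨C, hC⟩ := hc
  exact ⟨C, fun x hx => le_trans (le_add_of_nonneg_right (by positivity))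
    (hC (add_abs_sub_rpow_mem_pVarSums (S := S) (p := p) hbc hx))⟩

theorem pVariation_add_abs_sub_rpow_le (hab : a ≤ b) (hbc : b ≤ c)
    (hc : BddAbove (pVarSums S p a c)) :
    pVariation S p a b + |S c - S b| ^ p ≤ pVariation S p a c := by
  rw [← le_sub_iff_add_le]
  refine csSup_le ⟨_, abs_sub_rpow_mem_pVarSums hab⟩ fun x hx => ?_
  rw [le_sub_iff_add_le]
  exact le_csSup hc (add_abs_sub_rpow_mem_pVarSums hbc hx)

theorem monotoneOn_pVariation {T : ℝ} (hT : BddAbove (pVarSums S p a T)) :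
    MonotoneOn (pVariation S p a) (Icc a T) := fun b hb c hc hbc =>
  le_trans (le_add_of_nonneg_right (by positivity))
    (pVariation_add_abs_sub_rpow_le hb.1 hbc (bddAbove_pVarSums_of_le hc.2 hT))

theorem abs_sub_le_pVariation_sub_rpow (hp : 0 < p) (hab : a ≤ b) (hbc : b ≤ c)
    (hc : BddAbove (pVarSums S p a c)) :
    |S c - S b| ≤ (pVariation S p a c - pVariation S p a b) ^ p⁻¹ := by
  have h := pVariation_add_abs_sub_rpow_le hab hbc hc
  have h0 : 0 ≤ |S c - S b| ^ p := by positivity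
  rw [le_rpow_inv_iff_of_pos (abs_nonneg _) (by linarith) hp]
  linarith

end PVariation

theorem continuousWithinAt_of_abs_sub_le_rpow {f V : ℝ → ℝ} {s : Set ℝ} {r x : ℝ} (hr : 0 < r)
    (hV : MonotoneOn V s) (hf : ∀ u ∈ s, ∀ v ∈ s, u ≤ v → |f v - f u| ≤ (V v - V u) ^ r)
    (hx : x ∈ s) (hVx : ContinuousWithinAt V s x) : ContinuousWithinAt f s x := by
  have hbound : ∀ y ∈ s, ‖f y - f x‖ ≤ |V y - V x| ^ r := by
    intro y hy
    rcases le_total x y with hxy | hyx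
    · rw [abs_of_nonneg (sub_nonneg.mpr (hV hx hy hxy))]
      exact hf x hx y hy hxy
    · rw [Real.norm_eq_abs, abs_sub_comm (f y), abs_sub_comm (V y),
        abs_of_nonneg (sub_nonneg.mpr (hV hy hx hyx))]
      exact hf y hy x hx hyx
  have hlim : Tendsto (fun y => |V y - V x| ^ r) (𝓝[s] x) (𝓝 0) := by
    simpa [zero_rpow hr.ne'] using
      ((hVx.sub (continuousWithinAt_const (b := V x))).abs.rpow_const (Or.inr hr.le)).tendsto
  rw [ContinuousWithinAt, tendsto_iff_norm_sub_tendsto_zero]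
  exact squeeze_zero' (Eventually.of_forall fun _ => norm_nonneg _)
    (eventually_nhdsWithin_of_forall hbound) hlim

theorem aestronglyMeasurable_of_abs_sub_le_rpow {μ : Measure ℝ} [NullSingletonClass μ]
    {f V : ℝ → ℝ} {s : Set ℝ} {r : ℝ} (hr : 0 < r) (hs : MeasurableSet s)
    (hV : MonotoneOn V s) (hf : ∀ u ∈ s, ∀ v ∈ s, u ≤ v → |f v - f u| ≤ (V v - V u) ^ r) :
    AEStronglyMeasurable f (μ.restrict s) := by
  set D := {x ∈ s | ¬ContinuousWithinAt V s x}
  have hD : D.Countable := hV.countable_not_continuousWithinAt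
  have hcont : ContinuousOn f (s \ D) := fun x hx =>
    (continuousWithinAt_of_abs_sub_le_rpow hr hV hf hx.1
      (not_not.mp fun h => hx.2 ⟨hx.1, h⟩)).mono sdiff_subset
  rw [← Measure.restrict_congr_set (sdiff_null_ae_eq_self (hD.measure_zero μ))]
  exact hcont.aestronglyMeasurable (hs.diff hD.measurableSet)

theorem IntervalIntegrable.integral_sub_integral_eq {f : ℝ → ℝ} {a b u v : ℝ}
    (hf : IntervalIntegrable f volume a b) (hu : u ∈ uIcc a b) (hv : v ∈ uIcc a b) :
    (∫ x in a..v, f x) - ∫ x in a..u, f x = ∫ x in u..v, f x :=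
  intervalIntegral.integral_interval_sub_left (hf.mono_set (uIcc_subset_uIcc left_mem_uIcc hv))
    (hf.mono_set (uIcc_subset_uIcc left_mem_uIcc hu))

theorem abs_intervalIntegral_mul_le {f g : ℝ → ℝ} {a b M : ℝ} (hab : a ≤ b)
    (hg : IntervalIntegrable g volume a b)
    (hfg : IntervalIntegrable (fun u => f u * g u) volume a b) (hf : ∀ u ∈ Icc a b, |f u| ≤ M) :
    |∫ u in a..b, f u * g u| ≤ M * ∫ u in a..b, |g u| := by
  rw [← intervalIntegral.integral_const_mul]
  refine (intervalIntegral.abs_integral_le_integral_abs hab).trans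
    (intervalIntegral.integral_mono_on hab hfg.abs (hg.abs.const_mul M) fun u hu => ?_)
  rw [abs_mul]
  exact mul_le_mul_of_nonneg_right (hf u hu) (abs_nonneg _)

theorem sum_mul_sub_sub_integral_eq {η η' S : ℝ → ℝ} {s t : ℝ} {n : ℕ} {P : ℕ → ℝ}
    (hP : IsPartitionOn s t n P)
    (hη : ∀ i < n, η (P (i + 1)) - η (P i) = ∫ u in P i..P (i + 1), η' u)
    (hη' : ∀ i < n, IntervalIntegrable η' volume (P i) (P (i + 1)))
    (hSη' : ∀ i < n, IntervalIntegrable (fun u => S u * η' u) volume (P i) (P (i + 1))) :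
    ∑ i ∈ Finset.range n, η (P i) * (S (P (i + 1)) - S (P i))
        - (η t * S t - η s * S s - ∫ u in s..t, S u * η' u)
      = ∑ i ∈ Finset.range n, ∫ u in P i..P (i + 1), (S u - S (P (i + 1))) * η' u := by
  obtain ⟨rfl, rfl, -⟩ := hP
  have hterm : ∀ i ∈ Finset.range n, ∫ u in P i..P (i + 1), (S u - S (P (i + 1))) * η' u
      = (∫ u in P i..P (i + 1), S u * η' u) - (η (P (i + 1)) - η (P i)) * S (P (i + 1)) := by
    intro i hi
    have hi := Finset.mem_range.mp hi
    rw [hη i hi, ← intervalIntegral.integral_mul_const,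
      ← intervalIntegral.integral_sub (hSη' i hi) ((hη' i hi).mul_const _)]
    exact intervalIntegral.integral_congr fun u _ => by ring
  rw [Finset.sum_congr rfl hterm, Finset.sum_sub_distrib,
    Finset.sum_range_mul_sub_eq (fun i => η (P i)) (fun i => S (P i)),
    intervalIntegral.sum_integral_adjacent_intervals hSη']
  ring

theorem IntervalIntegrable.mul_of_bddAbove_pVarSums {S g : ℝ → ℝ} {p a b : ℝ} (hp : 0 < p)
    (hab : a ≤ b) (hS : BddAbove (pVarSums S p a b)) (hg : IntervalIntegrable g volume a b) :
    IntervalIntegrable (fun u => S u * g u) volume a b := by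
  set V := pVariation S p a
  have ha : a ∈ Icc a b := left_mem_Icc.mpr hab
  have hV : MonotoneOn V (Icc a b) := monotoneOn_pVariation hS
  have hSV : ∀ u ∈ Icc a b, ∀ v ∈ Icc a b, u ≤ v → |S v - S u| ≤ (V v - V u) ^ p⁻¹ :=
    fun u hu v hv huv =>
      abs_sub_le_pVariation_sub_rpow hp hu.1 huv (bddAbove_pVarSums_of_le hv.2 hS)
  have hbound : ∀ u ∈ Icc a b, ‖S u‖ ≤ |S a| + (V b - V a) ^ p⁻¹ := fun u hu =>
    calc ‖S u‖ ≤ |S a| + |S u - S a| := by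
          rw [norm_eq_abs]; linarith [abs_sub_abs_le_abs_sub (S u) (S a)]
      _ ≤ |S a| + (V b - V a) ^ p⁻¹ := by
          gcongr
          refine (hSV a ha u hu hu.1).trans
            (rpow_le_rpow (sub_nonneg.mpr (hV ha hu hu.1)) ?_ (by positivity))
          linarith [hV hu (right_mem_Icc.mpr hab) hu.2]
  rw [intervalIntegrable_iff_integrableOn_Ioc_of_le hab] at hg ⊢
  exact hg.bdd_mul
    ((aestronglyMeasurable_of_abs_sub_le_rpow (inv_pos.mpr hp) measurableSet_Icc hV
      hSV).mono_measure (Measure.restrict_mono Ioc_subset_Icc_self le_rfl))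
    (ae_restrict_of_forall_mem measurableSet_Ioc fun u hu => hbound u (Ioc_subset_Icc_self hu))

theorem abs_integral_sub_mul_le_pVariation {S g : ℝ → ℝ} {p a b c : ℝ} (hp : 0 < p)
    (hab : a ≤ b) (hbc : b ≤ c) (hS : BddAbove (pVarSums S p a c))
    (hg : IntervalIntegrable g volume b c)
    (hSg : IntervalIntegrable (fun u => S u * g u) volume b c) :
    |∫ u in b..c, (S u - S c) * g u|
      ≤ (pVariation S p a c - pVariation S p a b) ^ p⁻¹ * ∫ u in b..c, |g u| := by
  refine abs_intervalIntegral_mul_le hbc hg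
    (by simpa only [sub_mul] using hSg.sub (hg.const_mul (S c))) fun u hu => ?_
  have hV := monotoneOn_pVariation hS
  have hu' : u ∈ Icc a c := ⟨hab.trans hu.1, hu.2⟩
  rw [abs_sub_comm]
  refine (abs_sub_le_pVariation_sub_rpow hp hu'.1 hu.2 hS).trans
    (rpow_le_rpow (sub_nonneg.mpr (hV hu' ⟨hab.trans hbc, le_rfl⟩ hu.2)) ?_ (by positivity))
  linarith [hV ⟨hab, hbc⟩ hu' hu.1]

theorem abs_sum_mul_sub_sub_integral_le {η η' S G : ℝ → ℝ} {p a s t : ℝ} {n : ℕ} {P : ℕ → ℝ}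
    (hp : 0 < p) (has : a ≤ s) (hP : IsPartitionOn s t n P) (hS : BddAbove (pVarSums S p a t))
    (hη : ∀ u ∈ Icc s t, ∀ v ∈ Icc s t, η v - η u = ∫ x in u..v, η' x)
    (hG : ∀ u ∈ Icc s t, ∀ v ∈ Icc s t, G v - G u = ∫ x in u..v, |η' x|)
    (hη' : IntervalIntegrable η' volume s t)
    (hSη' : IntervalIntegrable (fun u => S u * η' u) volume s t) :
    |∑ i ∈ Finset.range n, η (P i) * (S (P (i + 1)) - S (P i))
        - (η t * S t - η s * S s - ∫ u in s..t, S u * η' u)|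
      ≤ ∑ i ∈ Finset.range n, (pVariation S p a (P (i + 1)) - pVariation S p a (P i)) ^ p⁻¹
          * (G (P (i + 1)) - G (P i)) := by
  have hPi : ∀ i < n, P i ∈ Icc s t ∧ P (i + 1) ∈ Icc s t := fun i hi =>
    ⟨hP.mem_Icc hi.le, hP.mem_Icc hi⟩
  have hsub : ∀ i < n, uIcc (P i) (P (i + 1)) ⊆ uIcc s t := fun i hi =>
    uIcc_subset_uIcc (Icc_subset_uIcc (hPi i hi).1) (Icc_subset_uIcc (hPi i hi).2)
  rw [sum_mul_sub_sub_integral_eq hP (fun i hi => hη _ (hPi i hi).1 _ (hPi i hi).2)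
    (fun i hi => hη'.mono_set (hsub i hi)) (fun i hi => hSη'.mono_set (hsub i hi))]
  refine (Finset.abs_sum_le_sum_abs _ _).trans (Finset.sum_le_sum fun i hi => ?_)
  have hi := Finset.mem_range.mp hi
  rw [hG _ (hPi i hi).1 _ (hPi i hi).2]
  exact abs_integral_sub_mul_le_pVariation hp (has.trans (hPi i hi).1.1) (hP.2.2 i hi)
    (bddAbove_pVarSums_of_le (hPi i hi).2.2 hS) (hη'.mono_set (hsub i hi))
    (hSη'.mono_set (hsub i hi))

/-- The Stieltjes integral `∫ₛᵗ S dη` against the absolutely continuous `η` is written as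
`∫ₛᵗ S u * η' u du`. -/
theorem young_integral_exists_and_integration_by_parts
    (T : ℝ) (hT : 0 < T) (p : ℝ) (hp : 1 ≤ p)
    (η η' S : ℝ → ℝ)
    (hη : ∀ t ∈ Set.Icc 0 T, η t = η 0 + ∫ s in (0:ℝ)..t, η' s)
    (hη' : IntervalIntegrable η' volume 0 T)
    (hS : ∃ C : ℝ, ∀ (n : ℕ) (P : ℕ → ℝ), IsPartitionOn 0 T n P →
      (∑ i ∈ Finset.range n, |S (P (i + 1)) - S (P i)| ^ p) ≤ C) :
    ∀ s t : ℝ, 0 ≤ s → s ≤ t → t ≤ T →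
      ∃ I : ℝ,
        (∀ ε > (0:ℝ), ∃ δ > (0:ℝ), ∀ (n : ℕ) (P : ℕ → ℝ),
          IsPartitionOn s t n P → (∀ i, i < n → P (i + 1) - P i ≤ δ) →
          |(∑ i ∈ Finset.range n, η (P i) * (S (P (i + 1)) - S (P i))) - I| ≤ ε) ∧
        I + (∫ u in s..t, S u * η' u) = η t * S t - η s * S s := by
  intro s t hs hst htT
  obtain ⟨C, hC⟩ := hS
  have hp0 : 0 < p := one_pos.trans_le hp
  have hST : BddAbove (pVarSums S p 0 T) := ⟨C, by rintro _ ⟨n, P, hP, rfl⟩; exact hC n P hP⟩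
  have hIcc : Icc s t ⊆ Icc 0 T := Icc_subset_Icc hs htT
  have hsub : Icc s t ⊆ uIcc 0 T := hIcc.trans Icc_subset_uIcc
  have hsub' : uIcc s t ⊆ uIcc 0 T :=
    uIcc_subset_uIcc (hsub (left_mem_Icc.mpr hst)) (hsub (right_mem_Icc.mpr hst))
  set G : ℝ → ℝ := fun x => ∫ u in (0:ℝ)..x, |η' u|
  have hG : ∀ u ∈ Icc s t, ∀ v ∈ Icc s t, G v - G u = ∫ x in u..v, |η' x| :=
    fun u hu v hv => hη'.abs.integral_sub_integral_eq (hsub hu) (hsub hv)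
  have hηinc : ∀ u ∈ Icc s t, ∀ v ∈ Icc s t, η v - η u = ∫ x in u..v, η' x := fun u hu v hv => by
    rw [hη u (hIcc hu), hη v (hIcc hv), add_sub_add_left_eq_sub]
    exact hη'.integral_sub_integral_eq (hsub hu) (hsub hv)
  have hGmono : MonotoneOn G (Icc s t) := fun u hu v hv huv => sub_nonneg.mp <|
    (hG u hu v hv).symm ▸ intervalIntegral.integral_nonneg huv fun _ _ => abs_nonneg _
  have hGcont : ContinuousOn G (Icc s t) :=
    (intervalIntegral.continuousOn_primitive_interval' hη'.abs left_mem_uIcc).mono hsub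
  refine ⟨η t * S t - η s * S s - ∫ u in s..t, S u * η' u, fun ε hε => ?_, by ring⟩
  obtain ⟨δ, hδ, hmesh⟩ := exists_mesh_sum_rpow_mul_le hst (inv_pos.mpr hp0)
    ((monotoneOn_pVariation hST).mono hIcc) hGmono hGcont hε
  exact ⟨δ, hδ, fun n P hP hPδ => (abs_sum_mul_sub_sub_integral_le hp0 hs hP
    (bddAbove_pVarSums_of_le htT hST) hηinc hG (hη'.mono_set hsub')
    ((IntervalIntegrable.mul_of_bddAbove_pVarSums hp0 hT.le hST hη').mono_set hsub')).trans
    (hmesh n P hP hPδ)⟩
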